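/- arXiv:1510.02366 — 2 statements merged into one kernel-verified Lean document; each statement's English description precedes it below -/
import Mathlib

section
/- Let s ∈ (0, 1/2), let Ω ⊆ ℝ³ be a measurable set, let D₁, …, D_N ⊆ Ω be pairwise disjoint measurable sets, and let c₁, …, c_N be real numbers. Define f := Σ_{j=1}^N c_j χ_{D_j}. Then [f]_{H^s(Ω)}² ≤ 2 Σ_{j=1}^N c_j² [χ_{D_j}]_{H^s(Ω)}². -/
/-!
For fixed `x, y` the sets `D_j` are disjoint, so at most two of the differences
`χ_{D_j} x - χ_{D_j} y` are nonzero (those of the sets containing `x` or `y`). Cauchy–Schwarz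
over these two terms gives `(f x - f y)² ≤ 2 Σ_j c_j² (χ_{D_j} x - χ_{D_j} y)²` pointwise, and
integrating against the kernel `‖x - y‖^{-(3+2s)}` over `Ω × Ω` gives the inequality.
-/

open MeasureTheory
open scoped ENNReal

/-- The squared Gagliardo `H^s(Ω)` seminorm of `f : ℝ³ → ℝ`,
`[f]_{H^s(Ω)}² = ∫_Ω ∫_Ω |f x − f y|² / |x − y|^{3+2s} dx dy`,
computed in `[0,∞]` with respect to Lebesgue measure. -/
noncomputable def gagliardoSq (s : ℝ) (Ω : Set (EuclideanSpace ℝ (Fin 3)))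
    (f : EuclideanSpace ℝ (Fin 3) → ℝ) : ℝ≥0∞ :=
  ∫⁻ x in Ω, ∫⁻ y in Ω, ENNReal.ofReal ((f x - f y) ^ 2 / ‖x - y‖ ^ (3 + 2 * s))

open Finset

section Indicators

variable {α ι : Type*} {D : ι → Set α}

lemma subsingleton_setOf_mem_of_pairwise_disjoint
    (hdisj : Pairwise fun i j => Disjoint (D i) (D j)) (x : α) :
    {j | x ∈ D j}.Subsingleton :=
  fun _ hi _ hj => hdisj.eq fun h => Set.disjoint_left.mp h hi hj

lemma sq_sum_indicator_sub_le [Fintype ι] (hdisj : Pairwise fun i j => Disjoint (D i) (D j))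
    (c : ι → ℝ) (x y : α) :
    (∑ j, c j * (D j).indicator 1 x - ∑ j, c j * (D j).indicator 1 y) ^ 2
      ≤ 2 * ∑ j, c j ^ 2 * ((D j).indicator 1 x - (D j).indicator 1 y) ^ 2 := by
  classical
  set a : ι → ℝ := fun j => c j * ((D j).indicator 1 x - (D j).indicator 1 y)
  let T : Finset ι := ({j | x ∈ D j} : Finset ι) ∪ ({j | y ∈ D j} : Finset ι)
  have hcard (z : α) : #{j | z ∈ D j} ≤ 1 := card_le_one.mpr fun i hi j hj =>
    subsingleton_setOf_mem_of_pairwise_disjoint hdisj z (mem_filter.mp hi).2 (mem_filter.mp hj).2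
  have hT : #T ≤ 2 := (card_union_le _ _).trans (add_le_add (hcard x) (hcard y))
  have hsupp : ∀ j ∉ T, a j = 0 := fun j hj => by
    simp only [T, mem_union, mem_filter, mem_univ, true_and, not_or] at hj
    simp [a, Set.indicator_of_notMem hj.1, Set.indicator_of_notMem hj.2]
  calc (∑ j, c j * (D j).indicator 1 x - ∑ j, c j * (D j).indicator 1 y) ^ 2
      = (∑ j ∈ T, a j) ^ 2 := by
        rw [← sum_sub_distrib, sum_subset (subset_univ T) fun j _ hj => hsupp j hj]
        simp only [a, mul_sub]
    _ ≤ #T * ∑ j ∈ T, a j ^ 2 := sq_sum_le_card_mul_sum_sq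
    _ ≤ 2 * ∑ j, a j ^ 2 := by
        refine mul_le_mul (mod_cast hT) ?_ (sum_nonneg fun j _ => sq_nonneg _) zero_le_two
        exact sum_le_sum_of_subset_of_nonneg (subset_univ T) fun j _ _ => sq_nonneg _
    _ = 2 * ∑ j, c j ^ 2 * ((D j).indicator 1 x - (D j).indicator 1 y) ^ 2 := by
        simp only [a, mul_pow]

lemma ofReal_sq_sum_indicator_sub_div_le [Fintype ι]
    (hdisj : Pairwise fun i j => Disjoint (D i) (D j)) (c : ι → ℝ) (x y : α) {d : ℝ}
    (hd : 0 ≤ d) :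
    ENNReal.ofReal ((∑ j, c j * (D j).indicator 1 x - ∑ j, c j * (D j).indicator 1 y) ^ 2 / d)
      ≤ ∑ j, 2 * ENNReal.ofReal (c j ^ 2) *
          ENNReal.ofReal (((D j).indicator 1 x - (D j).indicator 1 y) ^ 2 / d) := by
  calc _ ≤ ENNReal.ofReal
        (∑ j, 2 * c j ^ 2 * (((D j).indicator 1 x - (D j).indicator 1 y) ^ 2 / d)) := by
        gcongr
        refine (div_le_div_of_nonneg_right (sq_sum_indicator_sub_le hdisj c x y) hd).trans_eq ?_
        rw [mul_sum, sum_div]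
        exact sum_congr rfl fun j _ => by ring
    _ = _ := by
        rw [ENNReal.ofReal_sum_of_nonneg fun j _ => by positivity]
        refine sum_congr rfl fun j _ => ?_
        rw [ENNReal.ofReal_mul (by positivity), ENNReal.ofReal_mul zero_le_two,
          ENNReal.ofReal_ofNat]

end Indicators

lemma lintegral_lintegral_sum_const_mul {α β ι : Type*} [MeasurableSpace α]
    [MeasurableSpace β] {μ : Measure α} {ν : Measure β} [SFinite ν] (s : Finset ι)
    (a : ι → ℝ≥0∞) {g : ι → α → β → ℝ≥0∞}
    (hg : ∀ i ∈ s, Measurable (Function.uncurry (g i))) :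
    ∫⁻ x, ∫⁻ y, ∑ i ∈ s, a i * g i x y ∂ν ∂μ = ∑ i ∈ s, a i * ∫⁻ x, ∫⁻ y, g i x y ∂ν ∂μ := by
  have hinner : ∀ x, ∫⁻ y, ∑ i ∈ s, a i * g i x y ∂ν = ∑ i ∈ s, a i * ∫⁻ y, g i x y ∂ν :=
    fun x => by
      rw [lintegral_finsetSum _ fun i hi => ((hg i hi).of_uncurry_left).const_mul _]
      exact sum_congr rfl fun i hi => lintegral_const_mul _ (hg i hi).of_uncurry_left
  simp_rw [hinner]
  rw [lintegral_finsetSum _ fun i hi => ((hg i hi).lintegral_prod_right).const_mul _]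
  exact sum_congr rfl fun i hi => lintegral_const_mul _ (hg i hi).lintegral_prod_right

theorem stmt4_general (s : ℝ)
    (Ω : Set (EuclideanSpace ℝ (Fin 3)))
    (N : ℕ) (D : Fin N → Set (EuclideanSpace ℝ (Fin 3)))
    (hDmeas : ∀ j, MeasurableSet (D j))
    (hdisj : Pairwise fun i j => Disjoint (D i) (D j))
    (c : Fin N → ℝ) :
    gagliardoSq s Ω (fun x => ∑ j, c j * (D j).indicator 1 x)
      ≤ 2 * ∑ j, ENNReal.ofReal ((c j) ^ 2) * gagliardoSq s Ω ((D j).indicator 1) := by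
  calc gagliardoSq s Ω (fun x => ∑ j, c j * (D j).indicator 1 x)
      ≤ ∫⁻ x in Ω, ∫⁻ y in Ω, ∑ j, 2 * ENNReal.ofReal (c j ^ 2) * ENNReal.ofReal
          (((D j).indicator 1 x - (D j).indicator 1 y) ^ 2 / ‖x - y‖ ^ (3 + 2 * s)) :=
        lintegral_mono fun x => lintegral_mono fun y =>
          ofReal_sq_sum_indicator_sub_div_le hdisj c x y (by positivity)
    _ = ∑ j, 2 * ENNReal.ofReal (c j ^ 2) * gagliardoSq s Ω ((D j).indicator 1) :=
        lintegral_lintegral_sum_const_mul _ _ fun j _ =>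
          have := measurable_one.indicator (hDmeas j)
          by fun_prop
    _ = 2 * ∑ j, ENNReal.ofReal (c j ^ 2) * gagliardoSq s Ω ((D j).indicator 1) := by
        simp only [mul_sum, mul_assoc]

/-- Inequality (Hsbound2) in the proof of Lemma 2.5: for pairwise disjoint
`D₁, …, D_N ⊆ Ω` and `f = Σ_j c_j χ_{D_j}`,
`[f]_{H^s(Ω)}² ≤ 2 Σ_j c_j² [χ_{D_j}]_{H^s(Ω)}²`. -/
theorem stmt4 (s : ℝ) (hs : s ∈ Set.Ioo (0 : ℝ) (1 / 2))
    (Ω : Set (EuclideanSpace ℝ (Fin 3))) (hΩ : MeasurableSet Ω)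
    (N : ℕ) (D : Fin N → Set (EuclideanSpace ℝ (Fin 3)))
    (hDmeas : ∀ j, MeasurableSet (D j))
    (hDsub : ∀ j, D j ⊆ Ω)
    (hdisj : Pairwise fun i j => Disjoint (D i) (D j))
    (c : Fin N → ℝ) :
    gagliardoSq s Ω (fun x => ∑ j, c j * (D j).indicator 1 x)
      ≤ 2 * ∑ j, ENNReal.ofReal ((c j) ^ 2) * gagliardoSq s Ω ((D j).indicator 1) :=
  stmt4_general s Ω N D hDmeas hdisj c
end

section
/- Let D ⊆ ℝ³ be a bounded measurable set of positive finite Lebesgue measure |D|, let s ∈ (0, 1/2), and let P > 0 be such that the Lebesgue measure of { x ∈ D : dist(x, ∂D) < r } is at most P·r for every r > 0. Then ∫_D dist(x, ∂D)^{−2s} dx ≤ |D|^{1−2s} P^{2s} / (1 − 2s). -/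
/-!
Write `f = dist(·, ∂D)`, `σ = 2s` and `m = |D|`. By the layer-cake formula,
`∫ f^{-σ} = ∫₀^∞ |{f^{-σ} > t}| dt`, and `{f^{-σ} > t} = {f < t^{-1/σ}}` has measure at most
`min (m, P t^{-1/σ})`. Bounding by `m` on `(0, t₀]` and by `P t^{-1/σ}` on `(t₀, ∞)`, which is
integrable since `σ < 1`, and taking `t₀ = (P/m)^σ`, where the two bounds meet, gives
`m^{1-σ} P^σ / (1-σ)`.
-/

open MeasureTheory Set Filter Topology
open scoped ENNReal

theorem lintegral_Ioi_rpow_of_lt {a c : ℝ} (ha : a < -1) (hc : 0 < c) :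
    ∫⁻ t in Ioi c, ENNReal.ofReal (t ^ a) = ENNReal.ofReal (-c ^ (a + 1) / (a + 1)) := by
  rw [← integral_Ioi_rpow_of_lt ha hc, ofReal_integral_eq_lintegral_ofReal
    (integrableOn_Ioi_rpow_of_lt ha hc)]
  filter_upwards [ae_restrict_mem measurableSet_Ioi] with t ht
  exact Real.rpow_nonneg (hc.trans ht).le a

section DistributionBound

variable {α : Type*} [MeasurableSpace α] {μ : Measure α} {f : α → ℝ} {P σ : ℝ}

theorem ae_pos_of_measure_lt_le
    (hlayer : ∀ r, 0 < r → μ {x | f x < r} ≤ ENNReal.ofReal (P * r)) :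
    ∀ᵐ x ∂μ, 0 < f x := by
  have hlim : Tendsto (fun r => ENNReal.ofReal (P * r)) (𝓝[>] 0) (𝓝 0) :=
    ((ENNReal.continuous_ofReal.comp (continuous_const_mul P)).tendsto' 0 0
      (by simp)).mono_left nhdsWithin_le_nhds
  refine ae_iff.mpr (le_zero_iff.mp (ge_of_tendsto hlim ?_))
  filter_upwards [self_mem_nhdsWithin] with r hr
  exact (measure_mono fun x hx => (not_lt.mp hx).trans_lt hr).trans (hlayer r hr)

theorem measure_lt_rpow_neg_le (hf : ∀ x, 0 ≤ f x) (hσ0 : 0 < σ)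
    (hlayer : ∀ r, 0 < r → μ {x | f x < r} ≤ ENNReal.ofReal (P * r)) {t : ℝ} (ht : 0 < t) :
    μ {x | t < f x ^ (-σ)} ≤ ENNReal.ofReal (P * t ^ (-σ)⁻¹) := by
  refine (measure_mono fun x (hx : t < f x ^ (-σ)) => ?_).trans
    (hlayer _ (Real.rpow_pos_of_pos ht _))
  have hfx : 0 < f x := by
    refine (hf x).lt_of_ne fun h0 => ?_
    rw [← h0, Real.zero_rpow (neg_ne_zero.mpr hσ0.ne')] at hx
    exact ht.not_gt hx
  exact (Real.lt_rpow_inv_iff_of_neg hfx ht (neg_neg_of_pos hσ0)).mpr hx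

theorem lintegral_rpow_neg_le_split (hfm : AEMeasurable f μ) (hf : ∀ x, 0 ≤ f x) (hσ0 : 0 < σ)
    (hσ1 : σ < 1) (hlayer : ∀ r, 0 < r → μ {x | f x < r} ≤ ENNReal.ofReal (P * r))
    {t₀ : ℝ} (ht₀ : 0 < t₀) :
    ∫⁻ x, ENNReal.ofReal (f x) ^ (-σ) ∂μ
      ≤ μ univ * ENNReal.ofReal t₀
        + ENNReal.ofReal P * ENNReal.ofReal (-t₀ ^ ((-σ)⁻¹ + 1) / ((-σ)⁻¹ + 1)) := by
  have hq : (-σ)⁻¹ < -1 := by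
    rw [inv_neg, neg_lt_neg_iff]
    exact (one_lt_inv₀ hσ0).mpr hσ1
  calc ∫⁻ x, ENNReal.ofReal (f x) ^ (-σ) ∂μ
      = ∫⁻ x, ENNReal.ofReal (f x ^ (-σ)) ∂μ := by
        -- `ENNReal.ofReal 0 ^ (-σ) = ∞` whereas `(0 : ℝ) ^ (-σ) = 0`; this is harmless as `f > 0` a.e.
        refine lintegral_congr_ae ?_
        filter_upwards [ae_pos_of_measure_lt_le hlayer] with x hx
        exact ENNReal.ofReal_rpow_of_pos hx
    _ = ∫⁻ t in Ioi 0, μ {x | t < f x ^ (-σ)} :=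
        lintegral_eq_lintegral_meas_lt μ (ae_of_all _ fun x => Real.rpow_nonneg (hf x) _)
          (hfm.pow_const _)
    _ = (∫⁻ t in Ioc 0 t₀, μ {x | t < f x ^ (-σ)})
          + ∫⁻ t in Ioi t₀, μ {x | t < f x ^ (-σ)} := by
        rw [← Ioc_union_Ioi_eq_Ioi ht₀.le, lintegral_union measurableSet_Ioi Ioc_disjoint_Ioi_same]
    _ ≤ (∫⁻ _ in Ioc 0 t₀, μ univ)
          + ∫⁻ t in Ioi t₀, ENNReal.ofReal P * ENNReal.ofReal (t ^ (-σ)⁻¹) := by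
        refine add_le_add
          (setLIntegral_mono' measurableSet_Ioc fun t _ => measure_mono (subset_univ _))
          (setLIntegral_mono' measurableSet_Ioi fun t (ht : t₀ < t) => ?_)
        rw [← ENNReal.ofReal_mul' (Real.rpow_nonneg (ht₀.trans ht).le _)]
        exact measure_lt_rpow_neg_le hf hσ0 hlayer (ht₀.trans ht)
    _ = _ := by
        rw [setLIntegral_const, Real.volume_Ioc, sub_zero,
          lintegral_const_mul' _ _ ENNReal.ofReal_ne_top, lintegral_Ioi_rpow_of_lt hq ht₀]

theorem lintegral_rpow_neg_le_of_measure_lt_le [IsFiniteMeasure μ] (hfm : AEMeasurable f μ)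
    (hf : ∀ x, 0 ≤ f x) (hσ0 : 0 < σ) (hσ1 : σ < 1) (hP : 0 < P)
    (hlayer : ∀ r, 0 < r → μ {x | f x < r} ≤ ENNReal.ofReal (P * r)) :
    ∫⁻ x, ENNReal.ofReal (f x) ^ (-σ) ∂μ
      ≤ ENNReal.ofReal ((μ univ).toReal ^ (1 - σ) * P ^ σ / (1 - σ)) := by
  rcases eq_or_ne μ 0 with rfl | hμ
  · simp
  set m := (μ univ).toReal
  have hm : 0 < m := ENNReal.toReal_pos (Measure.measure_univ_ne_zero.mpr hμ) (measure_ne_top _ _)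
  have hσ1_sub : 0 < 1 - σ := sub_pos.mpr hσ1
  have hq : (-σ)⁻¹ + 1 = -((1 - σ) / σ) := by
    field_simp
    ring
  have hexp : σ * -((1 - σ) / σ) = σ - 1 := by
    field_simp
    ring
  refine (lintegral_rpow_neg_le_split hfm hf hσ0 hσ1 hlayer (t₀ := (P / m) ^ σ)
    (by positivity)).trans_eq ?_
  rw [hq, neg_div_neg_eq, ← ENNReal.ofReal_toReal (measure_ne_top μ univ),
    ← ENNReal.ofReal_mul hm.le, ← ENNReal.ofReal_mul hP.le,
    ← ENNReal.ofReal_add (by positivity) (by positivity), ← Real.rpow_mul (by positivity), hexp,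
    Real.rpow_sub (by positivity), Real.rpow_one, Real.div_rpow hP.le hm.le, Real.rpow_sub hm,
    Real.rpow_one]
  congr 1
  field_simp
  ring

end DistributionBound

theorem stmt7_general (D : Set (EuclideanSpace ℝ (Fin 3)))
    (hDfin : volume D < ⊤)
    (s : ℝ) (hs : s ∈ Set.Ioo (0 : ℝ) (1 / 2))
    (P : ℝ) (hP : 0 < P)
    (hlayer : ∀ r : ℝ, 0 < r →
      volume {x ∈ D | Metric.infDist x (frontier D) < r} ≤ ENNReal.ofReal (P * r)) :
    (∫⁻ x in D, (ENNReal.ofReal (Metric.infDist x (frontier D))) ^ (-(2 * s)))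
      ≤ ENNReal.ofReal
          ((volume D).toReal ^ (1 - 2 * s) * P ^ (2 * s) / (1 - 2 * s)) := by
  have : IsFiniteMeasure (volume.restrict D) := isFiniteMeasure_restrict.mpr hDfin.ne
  have hdist : Continuous fun x => Metric.infDist x (frontier D) := Metric.continuous_infDist_pt _
  have hlayer' : ∀ r, 0 < r →
      volume.restrict D {x | Metric.infDist x (frontier D) < r} ≤ ENNReal.ofReal (P * r) := by
    intro r hr
    rw [Measure.restrict_apply (measurableSet_lt hdist.measurable measurable_const),
      ofPred_inter_eq_sep]
    exact hlayer r hr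
  simpa only [Measure.restrict_apply_univ] using
    lintegral_rpow_neg_le_of_measure_lt_le hdist.aemeasurable (fun _ => Metric.infDist_nonneg)
      (by linarith [hs.1]) (by linarith [hs.2]) hP hlayer'

/-- Layer-cake estimate on the negative power of the distance to the boundary,
the analytic core of the Magnanini–Papi bound used in Lemma 2.5: if
`|{x ∈ D : dist(x,∂D) < r}| ≤ P r` for all `r > 0`, then
`∫_D dist(x,∂D)^{−2s} dx ≤ |D|^{1−2s} P^{2s} / (1−2s)`. -/
theorem stmt7 (D : Set (EuclideanSpace ℝ (Fin 3)))
    (hDmeas : MeasurableSet D) (hDbdd : Bornology.IsBounded D)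
    (hDpos : 0 < volume D) (hDfin : volume D < ⊤)
    (s : ℝ) (hs : s ∈ Set.Ioo (0 : ℝ) (1 / 2))
    (P : ℝ) (hP : 0 < P)
    (hlayer : ∀ r : ℝ, 0 < r →
      volume {x ∈ D | Metric.infDist x (frontier D) < r} ≤ ENNReal.ofReal (P * r)) :
    (∫⁻ x in D, (ENNReal.ofReal (Metric.infDist x (frontier D))) ^ (-(2 * s)))
      ≤ ENNReal.ofReal
          ((volume D).toReal ^ (1 - 2 * s) * P ^ (2 * s) / (1 - 2 * s)) :=
  stmt7_general D hDfin s hs P hP hlayer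
end
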